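/- Let (W, R) be a pair of random variables with a joint Lebesgue density, where W takes values in [0,1], and suppose R lies in the domain of attraction of a generalized Pareto distribution with shape λ: there are functions a(t) > 0 and b(t) = F_R^{−1}(1 − 1/t) (the 1 − 1/t quantile of R, strictly increasing in t to the upper endpoint of R) such that lim_{t→∞} P{R > a(t)r + b(t)} / P{R > b(t)} = K̄(r) = (1 + λr)₊^{−1/λ} for all r ≥ 0. Suppose further that for each w ∈ [0,1] the limit of the conditional probability P{W ≤ w | R = b(t)} as t → ∞ exists. Then, for a distribution function J on [0,1]: lim_{t→∞} P{W ≤ w, R > a(t)r + b(t) | R > b(t)} = J(w)·K̄(r) for all w ∈ [0,1] and r ≥ 0 if and only if lim_{t→∞} P{W ≤ w | R = b(t)} = J(w) for all w ∈ [0,1]. -/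

import Mathlib

open MeasureTheory Filter Set

noncomputable section

/-- The GP(1,λ) survivor function `(1 + λr)₊^{−1/λ}`, interpreted as `e^{−r}`
when `λ = 0`. -/
def gpTail (l r : ℝ) : ℝ :=
  if l = 0 then Real.exp (-r) else (max (1 + l * r) 0) ^ (-1 / l)

/-- The marginal density of `R`, from the joint density `f(r, w)` of `(R, W)`. -/
def fR (f : ℝ → ℝ → ℝ) (r : ℝ) : ℝ := ∫ w, f r w

/-- `P(R > x)`. -/
def SR (f : ℝ → ℝ → ℝ) (x : ℝ) : ℝ := ∫ r in Set.Ioi x, fR f r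

/-- `P(W ≤ w, R > x)`. -/
def jointP (f : ℝ → ℝ → ℝ) (w x : ℝ) : ℝ :=
  ∫ r in Set.Ioi x, ∫ v in Set.Iic w, f r v

/-- The conditional probability `P(W ≤ w | R = r)`. -/
def condP (f : ℝ → ℝ → ℝ) (w r : ℝ) : ℝ := (∫ v in Set.Iic w, f r v) / fR f r

/-! Conditional probabilities are only controlled along the quantile curve `b`, but that is
enough: for a.e. `s` with `fR f s > 0` the tail `SR f` takes the value `SR f s` only at `s`, so
`s = b (1 / SR f s)`. Hence once `condP f w (b u)` is `ε`-close to `c` for all `u ≥ T`, the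
sub-density `∫ v in Iic w, f s v` is within `ε · fR f s` of `c · fR f s` for a.e. `s > b T`.
Integrating over `s > x = a t r + b t` gives `jointP f w x = (c + o(1)) · SR f x`, and after
dividing by `SR f (b t)` the GP limit yields `c · K̄(r)`. The converse is uniqueness of limits
at `r = 0`. -/

section TailIntegral

variable {g : ℝ → ℝ}

lemma antitone_integral_Ioi (hg0 : 0 ≤ g) (hgi : Integrable g) :
    Antitone fun x => ∫ s in Ioi x, g s := fun _ _ hxy =>
  setIntegral_mono_set hgi.integrableOn (Eventually.of_forall hg0)
    (Eventually.of_forall (Ioi_subset_Ioi hxy))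

lemma integral_Ioc_eq_integral_Ioi_sub (hgi : Integrable g) {x y : ℝ} (hxy : x ≤ y) :
    ∫ s in Ioc x y, g s = (∫ s in Ioi x, g s) - ∫ s in Ioi y, g s := by
  rw [eq_sub_iff_add_eq, ← setIntegral_union (Ioc_disjoint_Ioi le_rfl) measurableSet_Ioi
    hgi.integrableOn hgi.integrableOn, Ioc_union_Ioi_eq_Ioi hxy]

lemma volume_pos_inter_eq_zero_of_setIntegral_eq_zero (hg0 : 0 ≤ g) (hgi : Integrable g)
    {A : Set ℝ} (hA : MeasurableSet A) (h : ∫ s in A, g s = 0) :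
    volume ({s | 0 < g s} ∩ A) = 0 := by
  have hzero : ∀ᵐ s ∂volume.restrict A, g s = 0 :=
    (setIntegral_eq_zero_iff_of_nonneg_ae (Eventually.of_forall hg0) hgi.integrableOn).1 h
  rw [ae_restrict_iff' hA] at hzero
  refine measure_eq_zero_iff_ae_notMem.2 (hzero.mono fun s hs hmem => ?_)
  exact (hs hmem.2).not_gt hmem.1

/-- A level set of the tail integral carries no `g`-mass: each compact piece of it lies in an
interval `[x, z]` whose endpoints have equal tail integrals. -/
lemma volume_pos_inter_levelSet_eq_zero (hg : Measurable g) (hg0 : 0 ≤ g) (hgi : Integrable g)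
    (v : ℝ) : volume ({s | 0 < g s} ∩ {x | ∫ s in Ioi x, g s = v}) = 0 := by
  have hA : MeasurableSet ({s | 0 < g s} ∩ {x | ∫ s in Ioi x, g s = v}) :=
    (measurableSet_lt measurable_const hg).inter
      ((antitone_integral_Ioi hg0 hgi).measurable (measurableSet_singleton v))
  rw [hA.measure_eq_iSup_isCompact]
  simp only [ENNReal.iSup_eq_zero]
  intro K hKA hK
  rcases K.eq_empty_or_nonempty with rfl | hne
  · exact measure_empty
  have hx := hK.sInf_mem hne
  have hz := hK.sSup_mem hne
  have hxz : sInf K ≤ sSup K := csInf_le_csSup hne hK.bddBelow hK.bddAbove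
  have hint : ∫ s in Icc (sInf K) (sSup K), g s = 0 := by
    rw [integral_Icc_eq_integral_Ioc, integral_Ioc_eq_integral_Ioi_sub hgi hxz, (hKA hx).2,
      (hKA hz).2, sub_self]
  refine measure_mono_null (fun s hs => ?_)
    (volume_pos_inter_eq_zero_of_setIntegral_eq_zero hg0 hgi measurableSet_Icc hint)
  exact ⟨(hKA hs).1, csInf_le hK.bddBelow hs, le_csSup hK.bddAbove hs⟩

lemma ae_eq_of_integral_Ioi_eq (hg : Measurable g) (hg0 : 0 ≤ g) (hgi : Integrable g) :
    ∀ᵐ s, 0 < g s → ∀ y, ∫ u in Ioi y, g u = ∫ u in Ioi s, g u → y = s := by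
  have hanti := antitone_integral_Ioi hg0 hgi
  have hlevel : ∀ᵐ s, ∀ q : ℚ,
      s ∉ {s | 0 < g s} ∩ {x | ∫ u in Ioi x, g u = ∫ u in Ioi (q : ℝ), g u} :=
    ae_all_iff.2 fun q => measure_eq_zero_iff_ae_notMem.1
      (volume_pos_inter_levelSet_eq_zero hg hg0 hgi _)
  filter_upwards [hlevel] with s hs hpos y hy
  by_contra hne
  suffices ∃ q : ℚ, ∫ u in Ioi (q : ℝ), g u = ∫ u in Ioi s, g u by
    obtain ⟨q, hq⟩ := this
    exact hs q ⟨hpos, hq.symm⟩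
  rcases lt_or_gt_of_ne hne with hys | hsy
  · obtain ⟨q, hyq, hqs⟩ := exists_rat_btwn hys
    exact ⟨q, le_antisymm (hy ▸ hanti hyq.le) (hanti hqs.le)⟩
  · obtain ⟨q, hsq, hqy⟩ := exists_rat_btwn hsy
    exact ⟨q, le_antisymm (hanti hsq.le) (hy ▸ hanti hqy.le)⟩

end TailIntegral

lemma abs_integral_sub_mul_le {α : Type*} [MeasurableSpace α] {μ : Measure α} {h g : α → ℝ}
    (hh : Integrable h μ) (hg : Integrable g μ) {c ε : ℝ}
    (hbound : ∀ᵐ s ∂μ, |h s - c * g s| ≤ ε * g s) :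
    |∫ s, h s ∂μ - c * ∫ s, g s ∂μ| ≤ ε * ∫ s, g s ∂μ := by
  rw [← integral_const_mul, ← integral_const_mul, ← integral_sub hh (hg.const_mul c)]
  exact abs_integral_le_integral_abs.trans
    (integral_mono_ae (hh.sub (hg.const_mul c)).abs (hg.const_mul ε) hbound)

open Topology Asymptotics

section JointDensity

variable {f : ℝ → ℝ → ℝ}

lemma fR_nonneg (hf0 : ∀ r w, 0 ≤ f r w) : 0 ≤ fR f := fun r => integral_nonneg (hf0 r)

lemma measurable_fR (hf : Measurable (Function.uncurry f)) : Measurable (fR f) :=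
  hf.stronglyMeasurable.integral_prod_right.measurable

lemma integrable_fR (hf : Integrable (Function.uncurry f) (volume.prod volume)) :
    Integrable (fR f) :=
  hf.integral_prod_left

lemma integrable_integral_Iic (hf : Integrable (Function.uncurry f) (volume.prod volume))
    (w : ℝ) : Integrable fun r => ∫ v in Iic w, f r v := by
  have h := hf.restrict (s := univ ×ˢ Iic w)
  rw [← Measure.prod_restrict, Measure.restrict_univ] at h
  exact h.integral_prod_left

lemma SR_nonneg (hf0 : ∀ r w, 0 ≤ f r w) (x : ℝ) : 0 ≤ SR f x :=
  setIntegral_nonneg measurableSet_Ioi fun r _ => fR_nonneg hf0 r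

lemma antitone_SR (hf0 : ∀ r w, 0 ≤ f r w)
    (hf : Integrable (Function.uncurry f) (volume.prod volume)) : Antitone (SR f) :=
  antitone_integral_Ioi (fR_nonneg hf0) (integrable_fR hf)

/-- Injectivity of `SR f` at `s` rules out `SR f s = 0`, where `1 / SR f s` would be junk. -/
lemma quantile_eq_of_SR_injective_at (hf0 : ∀ r w, 0 ≤ f r w)
    (hf : Integrable (Function.uncurry f) (volume.prod volume)) {b : ℝ → ℝ}
    (hb_q : ∀ t, 1 < t → SR f (b t) = 1 / t) {T s : ℝ} (hT : 1 < T) (hs : SR f s ≤ 1 / T)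
    (hinj : ∀ y, SR f y = SR f s → y = s) : T ≤ 1 / SR f s ∧ b (1 / SR f s) = s := by
  have hpos : 0 < SR f s := by
    refine (SR_nonneg hf0 s).lt_of_ne fun h0 => ?_
    have hflat : SR f (s + 1) = SR f s :=
      le_antisymm (antitone_SR hf0 hf (by linarith)) (h0 ▸ SR_nonneg hf0 _)
    linarith [hinj _ hflat]
  have hTs : T ≤ 1 / SR f s := by
    rw [le_one_div (by linarith) hpos]
    exact hs
  exact ⟨hTs, hinj _ (by rw [hb_q _ (hT.trans_le hTs), one_div_one_div])⟩

lemma ae_abs_integral_Iic_sub_mul_fR_le (hf_meas : Measurable (Function.uncurry f))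
    (hf0 : ∀ r w, 0 ≤ f r w) (hf : Integrable (Function.uncurry f) (volume.prod volume))
    {b : ℝ → ℝ} (hb_q : ∀ t, 1 < t → SR f (b t) = 1 / t) {w c ε T : ℝ} (hT : 1 < T)
    (hTc : ∀ u, T ≤ u → |condP f w (b u) - c| ≤ ε) :
    ∀ᵐ s, SR f s ≤ 1 / T → |(∫ v in Iic w, f s v) - c * fR f s| ≤ ε * fR f s := by
  filter_upwards [ae_eq_of_integral_Ioi_eq (measurable_fR hf_meas) (fR_nonneg hf0)
    (integrable_fR hf), hf.prod_right_ae] with s hinj hfs hs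
  rcases (fR_nonneg hf0 s).eq_or_lt with hzero | hpos
  · have hle : ∫ v in Iic w, f s v ≤ fR f s :=
      setIntegral_le_integral hfs (Eventually.of_forall (hf0 s))
    have hge : 0 ≤ ∫ v in Iic w, f s v := setIntegral_nonneg measurableSet_Iic fun v _ => hf0 s v
    rw [← hzero] at hle ⊢
    simp [le_antisymm hle hge]
  · obtain ⟨hTs, hbs⟩ := quantile_eq_of_SR_injective_at hf0 hf hb_q hT hs (hinj hpos)
    have hsplit : (∫ v in Iic w, f s v) - c * fR f s = (condP f w s - c) * fR f s := by
      rw [condP, sub_mul, div_mul_cancel₀ _ hpos.ne']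
    rw [hsplit, abs_mul, abs_of_pos hpos]
    exact mul_le_mul_of_nonneg_right (hbs ▸ hTc _ hTs) hpos.le

lemma eventually_abs_jointP_sub_mul_SR_le (hf_meas : Measurable (Function.uncurry f))
    (hf0 : ∀ r w, 0 ≤ f r w) (hf : Integrable (Function.uncurry f) (volume.prod volume))
    {b x : ℝ → ℝ} (hb_q : ∀ t, 1 < t → SR f (b t) = 1 / t) (hbx : ∀ t, b t ≤ x t) {w c : ℝ}
    (hc : Tendsto (fun t => condP f w (b t)) atTop (𝓝 c)) {ε : ℝ} (hε : 0 < ε) :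
    ∀ᶠ t in atTop, |jointP f w (x t) - c * SR f (x t)| ≤ ε * SR f (x t) := by
  obtain ⟨T, hTc⟩ := eventually_atTop.1
    ((hc.eventually (Metric.closedBall_mem_nhds c hε)).and (eventually_gt_atTop 1))
  have hT : 1 < T := (hTc T le_rfl).2
  have hae := ae_abs_integral_Iic_sub_mul_fR_le hf_meas hf0 hf hb_q hT
    (fun u hu => (hTc u hu).1)
  filter_upwards [eventually_ge_atTop T] with t ht
  refine abs_integral_sub_mul_le (integrable_integral_Iic hf w).integrableOn
    (integrable_fR hf).integrableOn ?_
  filter_upwards [ae_restrict_of_ae hae, ae_restrict_mem measurableSet_Ioi] with s hs hxs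
  refine hs ?_
  calc SR f s ≤ SR f (b t) := antitone_SR hf0 hf ((hbx t).trans (le_of_lt hxs))
    _ = 1 / t := hb_q t (hT.trans_le ht)
    _ ≤ 1 / T := one_div_le_one_div_of_le (by linarith) ht

lemma tendsto_jointP_div_SR (hf_meas : Measurable (Function.uncurry f))
    (hf0 : ∀ r w, 0 ≤ f r w) (hf : Integrable (Function.uncurry f) (volume.prod volume))
    {b x : ℝ → ℝ} (hb_q : ∀ t, 1 < t → SR f (b t) = 1 / t) (hbx : ∀ t, b t ≤ x t) {w c K : ℝ}
    (hc : Tendsto (fun t => condP f w (b t)) atTop (𝓝 c))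
    (hK : Tendsto (fun t => SR f (x t) / SR f (b t)) atTop (𝓝 K)) :
    Tendsto (fun t => jointP f w (x t) / SR f (b t)) atTop (𝓝 (c * K)) := by
  have hsmall : (fun t => (jointP f w (x t) - c * SR f (x t)) / SR f (b t)) =o[atTop]
      fun t => SR f (x t) / SR f (b t) := by
    refine IsLittleO.of_bound fun ε hε => ?_
    filter_upwards [eventually_abs_jointP_sub_mul_SR_le hf_meas hf0 hf hb_q hbx hc hε] with t ht
    rw [Real.norm_eq_abs, Real.norm_eq_abs, abs_div, abs_div, abs_of_nonneg (SR_nonneg hf0 (x t)),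
      mul_div_assoc']
    exact div_le_div_of_nonneg_right ht (abs_nonneg _)
  have hzero := (isLittleO_one_iff ℝ).1 (hsmall.trans_isBigO (hK.isBigO_one ℝ))
  convert hzero.add (hK.const_mul c) using 1
  · ext t
    ring
  · simp

end JointDensity

lemma gpTail_zero (l : ℝ) : gpTail l 0 = 1 := by
  unfold gpTail
  split_ifs <;> simp

theorem stmt13_general (f : ℝ → ℝ → ℝ)
    -- `f` is a joint Lebesgue density of `(R, W)` ...
    (hf_meas : Measurable (Function.uncurry f))
    (hf_nonneg : ∀ r w, 0 ≤ f r w)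
    (hf_int : Integrable (Function.uncurry f)
      ((volume : Measure ℝ).prod (volume : Measure ℝ)))
    (l : ℝ) (a b : ℝ → ℝ)
    (ha_pos : ∀ t : ℝ, 0 < a t)
    -- `b(t)` is the `1 − 1/t` quantile of `R`, strictly increasing in `t`
    (hb_q : ∀ t : ℝ, 1 < t → SR f (b t) = 1 / t)
    -- `R` lies in the GP domain of attraction with shape `λ`:
    (hGP : ∀ r : ℝ, 0 ≤ r →
      Tendsto (fun t => SR f (a t * r + b t) / SR f (b t)) atTop
        (nhds (gpTail l r)))
    -- the conditional limits exist:
    (hcond : ∀ w ∈ Set.Icc (0:ℝ) 1,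
      ∃ cw : ℝ, Tendsto (fun t => condP f w (b t)) atTop (nhds cw)) :
    ∀ J : ℝ → ℝ, MonotoneOn J (Set.Icc (0:ℝ) 1) →
      ((∀ w ∈ Set.Icc (0:ℝ) 1, ∀ r : ℝ, 0 ≤ r →
          Tendsto (fun t => jointP f w (a t * r + b t) / SR f (b t)) atTop
            (nhds (J w * gpTail l r))) ↔
        (∀ w ∈ Set.Icc (0:ℝ) 1,
          Tendsto (fun t => condP f w (b t)) atTop (nhds (J w)))) := by
  intro J _
  have hlim : ∀ w c r, 0 ≤ r → Tendsto (fun t => condP f w (b t)) atTop (𝓝 c) →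
      Tendsto (fun t => jointP f w (a t * r + b t) / SR f (b t)) atTop (𝓝 (c * gpTail l r)) :=
    fun w c r hr hc => tendsto_jointP_div_SR hf_meas hf_nonneg hf_int hb_q
      (fun t => le_add_of_nonneg_left (mul_nonneg (ha_pos t).le hr)) hc (hGP r hr)
  refine ⟨fun hjoint w hw => ?_, fun hJ w hw r hr => hlim w _ r hr (hJ w hw)⟩
  obtain ⟨c, hc⟩ := hcond w hw
  have hcJ : c = J w := by
    simpa [gpTail_zero] using
      tendsto_nhds_unique (hlim w c 0 le_rfl hc) (hjoint w hw 0 le_rfl)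
  rwa [← hcJ]

/-- Proposition in Appendix A.1: for `(W, R)` with a joint
density, `W` valued in `[0,1]`, `R` in the GP domain of attraction with shape
`λ` and normalisation `a(t) > 0`, `b(t) = F_R^{−1}(1 − 1/t)`, and assuming the
conditional limits exist, for any distribution function `J` on `[0,1]`:
`P{W ≤ w, R > a(t)r + b(t) | R > b(t)} → J(w) K̄(r)` for all `w ∈ [0,1]`,
`r ≥ 0`, if and only if `P{W ≤ w | R = b(t)} → J(w)` for all `w ∈ [0,1]`. -/
theorem stmt13 (f : ℝ → ℝ → ℝ)
    -- `f` is a joint Lebesgue density of `(R, W)` ...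
    (hf_meas : Measurable (Function.uncurry f))
    (hf_nonneg : ∀ r w, 0 ≤ f r w)
    (hf_int : Integrable (Function.uncurry f)
      ((volume : Measure ℝ).prod (volume : Measure ℝ)))
    (hf_one : ∫ p : ℝ × ℝ, Function.uncurry f p
        ∂((volume : Measure ℝ).prod (volume : Measure ℝ)) = 1)
    -- ... with `W` taking values in `[0,1]`
    (hf_supp : ∀ r w : ℝ, w ∉ Set.Icc (0:ℝ) 1 → f r w = 0)
    (l : ℝ) (a b : ℝ → ℝ)
    (ha_pos : ∀ t : ℝ, 0 < a t)
    -- `b(t)` is the `1 − 1/t` quantile of `R`, strictly increasing in `t`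
    (hb_mono : StrictMonoOn b (Set.Ioi 1))
    (hb_q : ∀ t : ℝ, 1 < t → SR f (b t) = 1 / t)
    -- `R` lies in the GP domain of attraction with shape `λ`:
    (hGP : ∀ r : ℝ, 0 ≤ r →
      Tendsto (fun t => SR f (a t * r + b t) / SR f (b t)) atTop
        (nhds (gpTail l r)))
    -- the conditional limits exist:
    (hcond : ∀ w ∈ Set.Icc (0:ℝ) 1,
      ∃ cw : ℝ, Tendsto (fun t => condP f w (b t)) atTop (nhds cw)) :
    ∀ J : ℝ → ℝ, MonotoneOn J (Set.Icc (0:ℝ) 1) →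
      ((∀ w ∈ Set.Icc (0:ℝ) 1, ∀ r : ℝ, 0 ≤ r →
          Tendsto (fun t => jointP f w (a t * r + b t) / SR f (b t)) atTop
            (nhds (J w * gpTail l r))) ↔
        (∀ w ∈ Set.Icc (0:ℝ) 1,
          Tendsto (fun t => condP f w (b t)) atTop (nhds (J w)))) :=
  stmt13_general f hf_meas hf_nonneg hf_int l a b ha_pos hb_q hGP hcond
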